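/- If u is biharmonic on ℝⁿ and Δu is bounded on ℝⁿ (i.e., sup |Δu| < ∞) and u has sublinear growth, then u is harmonic; combined with the Liouville theorem for sublinear harmonic functions on ℝⁿ this forces u to be constant. -/

import Mathlib

open MeasureTheory

noncomputable def lap {n : ℕ} (u : EuclideanSpace ℝ (Fin n) → ℝ)
    (x : EuclideanSpace ℝ (Fin n)) : ℝ :=
  ∑ i : Fin n, fderiv ℝ (fun y => fderiv ℝ u y (EuclideanSpace.single i 1)) x
    (EuclideanSpace.single i 1)

open Metric Set Function

noncomputable section
def eta : ContDiffBump (1/4 : ℝ) := ⟨1/8, 1/4, by norm_num, by norm_num⟩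

lemma eta_zero {t : ℝ} (ht : 1/2 ≤ t) : eta t = 0 := by
  have : t ∉ Function.support (eta : ℝ → ℝ) := by
    rw [eta.support_eq]
    simp only [mem_ball, Real.dist_eq, not_lt]
    rw [show eta.rOut = 1/4 from rfl, abs_of_nonneg (by linarith)]; linarith
  simpa [Function.mem_support, not_not] using this

lemma eta_cont : Continuous (eta : ℝ → ℝ) := eta.continuous
lemma eta_cont2 : Continuous (fun t => (1/2 : ℝ) * eta t) := continuous_const.mul eta_cont

def zeta (σ : ℝ) : ℝ := ∫ t in σ..1, (1/2) * eta t

lemma zeta_hasDeriv (σ : ℝ) : HasDerivAt zeta (-((1/2) * eta σ)) σ := by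
  have hint : IntervalIntegrable (fun t => (1/2) * eta t) volume σ 1 :=
    eta_cont2.intervalIntegrable _ _
  exact intervalIntegral.integral_hasDerivAt_left hint
    (eta_cont2.stronglyMeasurableAtFilter _ _) eta_cont2.continuousAt

lemma zeta_zero {σ : ℝ} (h : 1/2 ≤ σ) : zeta σ = 0 := by
  unfold zeta
  apply intervalIntegral.integral_zero_ae
  filter_upwards [] with t
  intro ht
  have : (1:ℝ)/2 ≤ t := by
    rcases le_total σ 1 with h1 | h1
    · rw [uIoc_of_le h1] at ht; exact le_trans h (le_of_lt ht.1)
    · rw [uIoc_of_ge h1] at ht; linarith [ht.1]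
  rw [eta_zero this, mul_zero]

lemma zeta_nonneg (σ : ℝ) : 0 ≤ zeta σ := by
  rcases le_total (1:ℝ) σ with h | h
  · rw [zeta_zero (by linarith)]
  · exact intervalIntegral.integral_nonneg h
      (fun t _ => mul_nonneg (by norm_num) (eta.nonneg' _))

lemma zeta_pos0 : 0 < zeta 0 := by
  have h1 : zeta 0 = (∫ t in (0:ℝ)..(1/8), (1/2)*eta t) + ((∫ t in (1/8:ℝ)..(3/8), (1/2)*eta t) + ∫ t in (3/8:ℝ)..1, (1/2)*eta t) := by
    unfold zeta
    rw [← intervalIntegral.integral_add_adjacent_intervals (b := 3/8)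
        (eta_cont2.intervalIntegrable _ _) (eta_cont2.intervalIntegrable _ _),
      ← intervalIntegral.integral_add_adjacent_intervals (b := 1/8)
        (eta_cont2.intervalIntegrable _ _) (eta_cont2.intervalIntegrable _ _)]
    ring
  have h2 : (∫ t in (1/8:ℝ)..(3/8), (1/2)*eta t) = ∫ t in (1/8:ℝ)..(3/8), (1/2:ℝ) := by
    apply intervalIntegral.integral_congr
    intro t ht
    rw [uIcc_of_le (by norm_num)] at ht
    have he : eta t = 1 := eta.one_of_mem_closedBall (by
      simp only [mem_closedBall, Real.dist_eq]
      rw [show eta.rIn = 1/8 from rfl, abs_le]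
      constructor <;> [linarith [ht.1]; linarith [ht.2]])
    dsimp only; rw [he, mul_one]
  have h3 : (0:ℝ) < (∫ t in (1/8:ℝ)..(3/8), (1/2:ℝ)) := by simp; norm_num
  have h4 : 0 ≤ (∫ t in (0:ℝ)..(1/8), (1/2)*eta t) :=
    intervalIntegral.integral_nonneg (by norm_num) (fun t _ => mul_nonneg (by norm_num) (eta.nonneg' _))
  have h5 : 0 ≤ (∫ t in (3/8:ℝ)..1, (1/2)*eta t) :=
    intervalIntegral.integral_nonneg (by norm_num) (fun t _ => mul_nonneg (by norm_num) (eta.nonneg' _))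
  rw [h1]; rw [h2] at *; linarith

lemma zeta_diff : Differentiable ℝ zeta := fun σ => (zeta_hasDeriv σ).differentiableAt
variable {n : ℕ}
local notation "E" => EuclideanSpace ℝ (Fin n)

def phi (y : E) : ℝ := eta (@inner ℝ _ _ y y)
def Phi (y : E) : ℝ := zeta (@inner ℝ _ _ y y)

lemma Q_contDiff : ContDiff ℝ (⊤:ℕ∞) (fun y : E => @inner ℝ _ _ y y) :=
  contDiff_id.inner ℝ contDiff_id

lemma Q_eq (y : E) : @inner ℝ _ _ y y = ‖y‖^2 := real_inner_self_eq_norm_sq y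

lemma phi_contDiff : ContDiff ℝ (⊤:ℕ∞) (phi (n := n)) := eta.contDiff.comp Q_contDiff
lemma phi_cont : Continuous (phi (n := n)) := phi_contDiff.continuous
lemma Phi_diff : Differentiable ℝ (Phi (n := n)) := zeta_diff.comp (Q_contDiff.differentiable (by simp))
lemma Phi_cont : Continuous (Phi (n := n)) := Phi_diff.continuous
lemma phi_nonneg (y : E) : 0 ≤ phi y := eta.nonneg' _
lemma Phi_nonneg (y : E) : 0 ≤ Phi y := zeta_nonneg _

lemma phi_zero {y : E} (h : 1 ≤ ‖y‖) : phi y = 0 := by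
  unfold phi; rw [Q_eq]; apply eta_zero; nlinarith
lemma Phi_zero {y : E} (h : 1 ≤ ‖y‖) : Phi y = 0 := by
  unfold Phi; rw [Q_eq]; apply zeta_zero; nlinarith

lemma phi_hcs : HasCompactSupport (phi (n := n)) :=
  HasCompactSupport.intro (isCompact_closedBall 0 1) (fun y hy => phi_zero (by
    simp only [mem_closedBall, dist_zero_right, not_le] at hy; linarith))
lemma Phi_hcs : HasCompactSupport (Phi (n := n)) :=
  HasCompactSupport.intro (isCompact_closedBall 0 1) (fun y hy => Phi_zero (by
    simp only [mem_closedBall, dist_zero_right, not_le] at hy; linarith))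

lemma phi_integrable : Integrable (phi (n := n)) := phi_cont.integrable_of_hasCompactSupport phi_hcs
lemma Phi_integrable : Integrable (Phi (n := n)) := Phi_cont.integrable_of_hasCompactSupport Phi_hcs

lemma Phi_hasFDerivAt (y : E) : HasFDerivAt Phi (-(phi y) • (innerSL ℝ y)) y := by
  have hQ : HasFDerivAt (fun y : E => @inner ℝ _ _ y y)
      ((fderivInnerCLM ℝ (y, y)).comp ((ContinuousLinearMap.id ℝ E).prod (ContinuousLinearMap.id ℝ E))) y := by
    simpa using (hasFDerivAt_id y).inner ℝ (hasFDerivAt_id y)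
  have h := HasDerivAt.comp_hasFDerivAt (f := fun y : E => @inner ℝ _ _ y y) y
    (zeta_hasDeriv _) hQ
  refine h.congr_fderiv ?_
  ext v
  simp only [neg_smul, ContinuousLinearMap.neg_apply, ContinuousLinearMap.smul_apply,
    innerSL_apply_apply, fderivInnerCLM_apply, ContinuousLinearMap.coe_comp', Function.comp_apply,
    ContinuousLinearMap.prod_apply, ContinuousLinearMap.coe_id', id_eq, smul_eq_mul]
  rw [real_inner_comm v y]
  unfold phi
  ring

lemma Phi_fderiv_single (y : E) (i : Fin n) :
    fderiv ℝ Phi y (EuclideanSpace.single i 1) = -(y i) * phi y := by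
  rw [(Phi_hasFDerivAt y).fderiv]
  simp [EuclideanSpace.inner_single_right, real_inner_comm]
  ring

lemma phi_pos_at (hn : 0 < n) : 0 < phi (EuclideanSpace.single (⟨0, hn⟩ : Fin n) (1/2 : ℝ)) := by
  unfold phi
  rw [Q_eq, EuclideanSpace.norm_single]
  rw [Real.norm_eq_abs]
  have : eta ((|1/2| : ℝ)^2) = 1 := eta.one_of_mem_closedBall (by
    rw [mem_closedBall, Real.dist_eq, show eta.rIn = 1/8 from rfl]
    norm_num)
  rw [this]; norm_num

lemma c0_pos (hn : 0 < n) : 0 < ∫ y : E, phi y := by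
  rw [integral_pos_iff_support_of_nonneg phi_nonneg phi_integrable]
  have hopen : IsOpen (Function.support (phi (n := n))) := phi_cont.isOpen_support
  exact hopen.measure_pos volume ⟨_, ne_of_gt (phi_pos_at hn)⟩

lemma A_pos : 0 < ∫ y : E, Phi y := by
  rw [integral_pos_iff_support_of_nonneg Phi_nonneg Phi_integrable]
  have hopen : IsOpen (Function.support (Phi (n := n))) := Phi_cont.isOpen_support
  apply hopen.measure_pos volume
  refine ⟨0, ?_⟩
  simp only [Function.mem_support, Phi]
  rw [inner_zero_left]
  exact ne_of_gt zeta_pos0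

lemma phi_lip : ∃ L : NNReal, LipschitzWith L (phi (n := n)) := by
  obtain ⟨C, hC⟩ := (Continuous.norm ((phi_contDiff.fderiv_right (m := 0) (by exact_mod_cast le_top)).continuous)).bounded_above_of_compact_support ((phi_hcs.fderiv ℝ).norm)
  refine ⟨C.toNNReal, lipschitzWith_of_nnnorm_fderiv_le (phi_contDiff.differentiable (by simp)) (fun x => ?_)⟩
  rw [← norm_toNNReal]
  exact Real.toNNReal_mono (by simpa using hC x)

lemma clm_decomp (T : (EuclideanSpace ℝ (Fin n)) →L[ℝ] ℝ) (y : E) :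
    T y = ∑ i, y i * T (EuclideanSpace.single i 1) := by
  have hy : y = ∑ i, y i • EuclideanSpace.single i 1 := by
    have := (EuclideanSpace.basisFun (Fin n) ℝ).sum_repr y
    simp only [EuclideanSpace.basisFun_repr, EuclideanSpace.basisFun_apply] at this
    exact this.symm
  conv_lhs => rw [hy]
  rw [map_sum]
  congr 1; ext i
  rw [T.map_smul, smul_eq_mul]

lemma integrable_aux {g : E → ℝ} (hg : Continuous g)
    (h0 : ∀ y : E, (1:ℝ) ≤ ‖y‖ → g y = 0) : Integrable g := by
  apply hg.integrable_of_hasCompactSupport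
  apply HasCompactSupport.intro (isCompact_closedBall 0 1)
  intro y hy
  apply h0
  rw [mem_closedBall, dist_zero_right, not_le] at hy
  exact hy.le

variable {f : EuclideanSpace ℝ (Fin n) → ℝ}

lemma fderiv_cont (hf : ContDiff ℝ (⊤:ℕ∞) f) : Continuous (fderiv ℝ f) := by
  have h : ContDiff ℝ (⊤:ℕ∞) (fderiv ℝ f) := hf.fderiv_right (by simp)
  exact h.continuous

lemma gi_contDiff (hf : ContDiff ℝ (⊤:ℕ∞) f) (i : Fin n) :
    ContDiff ℝ (⊤:ℕ∞) (fun z : E => fderiv ℝ f z (EuclideanSpace.single i 1)) :=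
  (hf.fderiv_right (by simp)).clm_apply contDiff_const

lemma Di_contDiff (hf : ContDiff ℝ (⊤:ℕ∞) f) (i : Fin n) :
    ContDiff ℝ (⊤:ℕ∞) (fun z : E =>
      fderiv ℝ (fun w => fderiv ℝ f w (EuclideanSpace.single i 1)) z (EuclideanSpace.single i 1)) :=
  ((gi_contDiff hf i).fderiv_right (by simp)).clm_apply contDiff_const

lemma lap_contDiff (hf : ContDiff ℝ (⊤:ℕ∞) f) : ContDiff ℝ (⊤:ℕ∞) (lap f) := by
  unfold lap
  exact ContDiff.sum (fun i _ => Di_contDiff hf i)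

lemma affine_contDiff (x₀ : E) (r : ℝ) : ContDiff ℝ (⊤:ℕ∞) (fun y : E => x₀ + r • y) :=
  contDiff_const.add (contDiff_id.const_smul r)

lemma fderiv_comp_affine {g : E → ℝ} (hg : Differentiable ℝ g) (x₀ : E) (r : ℝ) (y v : E) :
    fderiv ℝ (fun y => g (x₀ + r • y)) y v = r * fderiv ℝ g (x₀ + r • y) v := by
  have h1 : HasFDerivAt (fun y : E => x₀ + r • y) (r • ContinuousLinearMap.id ℝ (EuclideanSpace ℝ (Fin n))) y :=
    ((hasFDerivAt_id y).const_smul r).const_add x₀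
  have h2 : HasFDerivAt g (fderiv ℝ g (x₀ + r • y)) (x₀ + r • y) := (hg _).hasFDerivAt
  have h3 := h2.comp y h1
  rw [show (fun y => g (x₀ + r • y)) = g ∘ (fun y : E => x₀ + r • y) from rfl, h3.fderiv]
  simp [smul_eq_mul]

lemma step1 (hf : ContDiff ℝ (⊤:ℕ∞) f) (x₀ : E) (r : ℝ) :
    HasDerivAt (fun t => ∫ y : E, f (x₀ + t • y) * phi y)
      (∫ y : E, fderiv ℝ f (x₀ + r • y) y * phi y) r := by
  obtain ⟨Cb, hCb⟩ := (isCompact_closedBall x₀ (|r|+1)).exists_bound_of_continuousOn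
      ((fderiv_cont hf).continuousOn)
  set C := max Cb 0 with hCdef
  have hC0 : (0:ℝ) ≤ C := le_max_right _ _
  have hCb' : ∀ z ∈ closedBall x₀ (|r|+1), ‖fderiv ℝ f z‖ ≤ C :=
    fun z hz => (hCb z hz).trans (le_max_left _ _)
  have cont1 : ∀ t : ℝ, Continuous fun y : E => f (x₀ + t • y) * phi y := fun t =>
    ((hf.continuous).comp (continuous_const.add (continuous_id.const_smul t))).mul phi_cont
  have contF' : Continuous fun y : E => fderiv ℝ f (x₀ + r • y) y * phi y := by
    have h1 : Continuous fun y : E => fderiv ℝ f (x₀ + r • y) :=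
      (fderiv_cont hf).comp (continuous_const.add (continuous_id.const_smul r))
    exact (isBoundedBilinearMap_apply.continuous.comp (h1.prodMk continuous_id)).mul phi_cont
  have := hasDerivAt_integral_of_dominated_loc_of_deriv_le (μ := volume)
    (F := fun t (y : E) => f (x₀ + t • y) * phi y)
    (F' := fun t (y : E) => fderiv ℝ f (x₀ + t • y) y * phi y)
    (bound := fun y : E => C * phi y)
    (ball_mem_nhds r one_pos)
    (Filter.Eventually.of_forall fun t => (cont1 t).aestronglyMeasurable)
    (integrable_aux (cont1 r) (fun y hy => by simp only [phi_zero hy, mul_zero]))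
    contF'.aestronglyMeasurable
    (Filter.Eventually.of_forall ?_)
    (integrable_aux (continuous_const.mul phi_cont) (fun y hy => by simp only [phi_zero hy, mul_zero]))
    (Filter.Eventually.of_forall ?_)
  · exact this.2
  · -- bound
    intro y t ht
    by_cases hy : (1:ℝ) ≤ ‖y‖
    · rw [phi_zero hy, mul_zero, mul_zero, norm_zero]
    · push_neg at hy
      have hz : x₀ + t • y ∈ closedBall x₀ (|r|+1) := by
        rw [mem_closedBall, dist_eq_norm, add_sub_cancel_left, norm_smul, Real.norm_eq_abs]
        have ht' : |t| ≤ |r| + 1 := by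
          rw [mem_ball, Real.dist_eq] at ht
          calc |t| = |t - r + r| := by ring_nf
          _ ≤ |t - r| + |r| := abs_add_le _ _
          _ ≤ |r| + 1 := by linarith
        nlinarith [norm_nonneg y, abs_nonneg t]
      rw [Real.norm_eq_abs, abs_mul, abs_of_nonneg (phi_nonneg y)]
      have h1 : |fderiv ℝ f (x₀ + t • y) y| ≤ ‖fderiv ℝ f (x₀ + t • y)‖ * ‖y‖ := by
        rw [← Real.norm_eq_abs]
        exact (fderiv ℝ f (x₀ + t • y)).le_opNorm y
      have h2 : ‖fderiv ℝ f (x₀ + t • y)‖ * ‖y‖ ≤ C := by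
        have := hCb' _ hz
        nlinarith [norm_nonneg y, norm_nonneg (fderiv ℝ f (x₀ + t • y))]
      exact mul_le_mul_of_nonneg_right (h1.trans h2) (phi_nonneg y)
  · -- differentiability
    intro y t ht
    have haff : HasDerivAt (fun t : ℝ => x₀ + t • y) y t := by
      simpa using ((hasDerivAt_id t).smul_const y).const_add x₀
    exact (((hf.differentiable (by simp)) _).hasFDerivAt.comp_hasDerivAt t haff).mul_const (phi y)

lemma step2 (hf : ContDiff ℝ (⊤:ℕ∞) f) (x₀ : E) (r : ℝ) :
    ∫ y : E, fderiv ℝ f (x₀ + r • y) y * phi y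
      = r * ∫ y : E, lap f (x₀ + r • y) * Phi y := by
  have haffc : Continuous (fun y : E => x₀ + r • y) := (affine_contDiff x₀ r).continuous
  have hgc : ∀ i : Fin n, Continuous (fun y : E => fderiv ℝ f (x₀ + r • y) (EuclideanSpace.single i 1)) :=
    fun i => ((gi_contDiff hf i).continuous).comp haffc
  have hgdiff : ∀ i : Fin n, Differentiable ℝ (fun y : E => fderiv ℝ f (x₀ + r • y) (EuclideanSpace.single i 1)) := by
    intro i
    have : ContDiff ℝ (⊤:ℕ∞) (fun y : E => fderiv ℝ f (x₀ + r • y) (EuclideanSpace.single i 1)) :=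
      (gi_contDiff hf i).comp (affine_contDiff x₀ r)
    exact this.differentiable (by simp)
  have hDc : ∀ i : Fin n, Continuous (fun y : E =>
      fderiv ℝ (fun w => fderiv ℝ f w (EuclideanSpace.single i 1)) (x₀ + r • y) (EuclideanSpace.single i 1)) :=
    fun i => ((Di_contDiff hf i).continuous).comp haffc
  have h1 : ∀ y : E, fderiv ℝ f (x₀ + r • y) y * phi y
      = ∑ i, fderiv ℝ f (x₀ + r • y) (EuclideanSpace.single i 1) * (y i * phi y) := by
    intro y
    rw [clm_decomp (fderiv ℝ f (x₀ + r • y)) y, Finset.sum_mul]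
    exact Finset.sum_congr rfl (fun i _ => by ring)
  have hint1 : ∀ i : Fin n, Integrable (fun y : E =>
      fderiv ℝ f (x₀ + r • y) (EuclideanSpace.single i 1) * (y i * phi y)) :=
    fun i => integrable_aux ((hgc i).mul ((PiLp.continuous_apply (p := 2) (β := fun _ : Fin n => ℝ) i).mul phi_cont))
      (fun y hy => by simp only [phi_zero hy, mul_zero])
  have hchain : ∀ (i : Fin n) (y : E),
      fderiv ℝ (fun w : E => fderiv ℝ f (x₀ + r • w) (EuclideanSpace.single i 1)) y (EuclideanSpace.single i 1)
        = r * fderiv ℝ (fun w : E => fderiv ℝ f w (EuclideanSpace.single i 1)) (x₀ + r • y) (EuclideanSpace.single i 1) :=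
    fun i y => fderiv_comp_affine ((gi_contDiff hf i).differentiable (by simp)) x₀ r y _
  calc (∫ y : E, fderiv ℝ f (x₀ + r • y) y * phi y)
      = ∫ y : E, ∑ i, fderiv ℝ f (x₀ + r • y) (EuclideanSpace.single i 1) * (y i * phi y) :=
        integral_congr_ae (Filter.Eventually.of_forall h1)
    _ = ∑ i, ∫ y : E, fderiv ℝ f (x₀ + r • y) (EuclideanSpace.single i 1) * (y i * phi y) :=
        integral_finset_sum _ (fun i _ => hint1 i)
    _ = ∑ i, ∫ y : E, Phi y * (r * fderiv ℝ (fun w : E => fderiv ℝ f w (EuclideanSpace.single i 1)) (x₀ + r • y) (EuclideanSpace.single i 1)) := by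
        refine Finset.sum_congr rfl (fun i _ => ?_)
        have H1 : Integrable (fun y : E => fderiv ℝ Phi y (EuclideanSpace.single i 1)
            * fderiv ℝ f (x₀ + r • y) (EuclideanSpace.single i 1)) := by
          have hrw : (fun y : E => fderiv ℝ Phi y (EuclideanSpace.single i 1)
              * fderiv ℝ f (x₀ + r • y) (EuclideanSpace.single i 1))
              = fun y : E => (-(y i) * phi y) * fderiv ℝ f (x₀ + r • y) (EuclideanSpace.single i 1) := by
            funext y; rw [Phi_fderiv_single y i]
          rw [hrw]
          exact integrable_aux ((((PiLp.continuous_apply (p := 2) (β := fun _ : Fin n => ℝ) i).neg).mul phi_cont).mul (hgc i))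
            (fun y hy => by simp only [phi_zero hy, mul_zero, zero_mul])
        have H2 : Integrable (fun y : E => Phi y *
            fderiv ℝ (fun w : E => fderiv ℝ f (x₀ + r • w) (EuclideanSpace.single i 1)) y (EuclideanSpace.single i 1)) := by
          have hrw : (fun y : E => Phi y *
              fderiv ℝ (fun w : E => fderiv ℝ f (x₀ + r • w) (EuclideanSpace.single i 1)) y (EuclideanSpace.single i 1))
              = fun y : E => Phi y * (r * fderiv ℝ (fun w : E => fderiv ℝ f w (EuclideanSpace.single i 1)) (x₀ + r • y) (EuclideanSpace.single i 1)) := by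
            funext y; rw [hchain i y]
          rw [hrw]
          exact integrable_aux (Phi_cont.mul (continuous_const.mul (hDc i)))
            (fun y hy => by simp only [Phi_zero hy, zero_mul])
        have H3 : Integrable (fun y : E => Phi y * fderiv ℝ f (x₀ + r • y) (EuclideanSpace.single i 1)) :=
          integrable_aux (Phi_cont.mul (hgc i)) (fun y hy => by simp only [Phi_zero hy, zero_mul])
        have ibp := integral_mul_fderiv_eq_neg_fderiv_mul_of_integrable (μ := volume)
          (f := Phi) (g := fun y : E => fderiv ℝ f (x₀ + r • y) (EuclideanSpace.single i 1))
          (v := EuclideanSpace.single i 1) H1 H2 H3 (fun x _ => Phi_diff x) (fun x _ => hgdiff i x)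
        calc (∫ y : E, fderiv ℝ f (x₀ + r • y) (EuclideanSpace.single i 1) * (y i * phi y))
            = ∫ y : E, -(fderiv ℝ Phi y (EuclideanSpace.single i 1)
                * fderiv ℝ f (x₀ + r • y) (EuclideanSpace.single i 1)) :=
              integral_congr_ae (Filter.Eventually.of_forall (fun y => by
                dsimp only; rw [Phi_fderiv_single y i]; ring))
          _ = -∫ y : E, fderiv ℝ Phi y (EuclideanSpace.single i 1)
                * fderiv ℝ f (x₀ + r • y) (EuclideanSpace.single i 1) := integral_neg _
          _ = ∫ y : E, Phi y * fderiv ℝ (fun w : E => fderiv ℝ f (x₀ + r • w) (EuclideanSpace.single i 1)) y (EuclideanSpace.single i 1) := by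
              rw [ibp]
          _ = ∫ y : E, Phi y * (r * fderiv ℝ (fun w : E => fderiv ℝ f w (EuclideanSpace.single i 1)) (x₀ + r • y) (EuclideanSpace.single i 1)) :=
              integral_congr_ae (Filter.Eventually.of_forall (fun y => by dsimp only; rw [hchain i y]))
    _ = ∫ y : E, ∑ i, Phi y * (r * fderiv ℝ (fun w : E => fderiv ℝ f w (EuclideanSpace.single i 1)) (x₀ + r • y) (EuclideanSpace.single i 1)) :=
        (integral_finset_sum _ (fun i _ => integrable_aux (g := fun y : E => Phi y * (r * fderiv ℝ (fun w : E => fderiv ℝ f w (EuclideanSpace.single i 1)) (x₀ + r • y) (EuclideanSpace.single i 1))) (Phi_cont.mul (continuous_const.mul (hDc i)))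
          (fun y hy => by simp only [Phi_zero hy, zero_mul]))).symm
    _ = ∫ y : E, r * (lap f (x₀ + r • y) * Phi y) :=
        integral_congr_ae (Filter.Eventually.of_forall (fun y => by
          dsimp only
          simp only [lap, Finset.mul_sum, Finset.sum_mul]
          exact Finset.sum_congr rfl (fun i _ => by ring)))
    _ = r * ∫ y : E, lap f (x₀ + r • y) * Phi y := integral_const_mul r _

lemma integrable_aux2 {g : E → ℝ} (R : ℝ) (hg : Continuous g)
    (h0 : ∀ y : E, R ≤ ‖y‖ → g y = 0) : Integrable g := by
  apply hg.integrable_of_hasCompactSupport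
  apply HasCompactSupport.intro (isCompact_closedBall 0 R)
  intro y hy
  apply h0
  rw [mem_closedBall, dist_zero_right, not_le] at hy
  exact hy.le

lemma keyDeriv (hf : ContDiff ℝ (⊤:ℕ∞) f) (x₀ : E) (r : ℝ) :
    HasDerivAt (fun t => ∫ y : E, f (x₀ + t • y) * phi y)
      (r * ∫ y : E, lap f (x₀ + r • y) * Phi y) r := by
  have h := step1 hf x₀ r
  rwa [step2 hf x₀ r] at h

lemma F_zero (f : E → ℝ) (x₀ : E) :
    ∫ y : E, f (x₀ + (0:ℝ) • y) * phi y = f x₀ * ∫ y : E, phi y := by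
  simp only [zero_smul, add_zero]
  rw [integral_const_mul]

lemma mvp (hf : ContDiff ℝ (⊤:ℕ∞) f) (hlap : ∀ x, lap f x = 0) (x₀ : E) (r : ℝ) :
    ∫ y : E, f (x₀ + r • y) * phi y = f x₀ * ∫ y : E, phi y := by
  have hdiff : Differentiable ℝ (fun t : ℝ => ∫ y : E, f (x₀ + t • y) * phi y) :=
    fun t => (keyDeriv hf x₀ t).differentiableAt
  have hderiv : ∀ t : ℝ, deriv (fun t : ℝ => ∫ y : E, f (x₀ + t • y) * phi y) t = 0 := by
    intro t
    have h := keyDeriv hf x₀ t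
    have hz : (∫ y : E, lap f (x₀ + t • y) * Phi y) = 0 := by
      have : ∀ y : E, lap f (x₀ + t • y) * Phi y = 0 := fun y => by rw [hlap, zero_mul]
      simp only [this, integral_zero]
    rw [hz, mul_zero] at h
    exact h.deriv
  have h := is_const_of_deriv_eq_zero hdiff hderiv r 0
  rw [h, F_zero]

lemma lap_const_is_zero (hn : 0 < n) (hf : ContDiff ℝ (⊤:ℕ∞) f) (c : ℝ)
    (hlap : ∀ x, lap f x = c) (C s : ℝ) (hC : 0 ≤ C) (hs0 : 0 ≤ s) (hs1 : s < 1)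
    (hgrow : ∀ x : E, |f x| ≤ C * (1 + ‖x‖ ^ s)) : c = 0 := by
  set c0 := ∫ y : E, phi y with hc0def
  set A := ∫ y : E, Phi y with hAdef
  have hApos : 0 < A := A_pos
  have hc0pos : 0 < c0 := c0_pos hn
  -- the function r ↦ ∫ f(r•y) φ(y) - c A r²/2 is constant
  have hG : ∀ r : ℝ, (∫ y : E, f ((0:E) + r • y) * phi y) - c * A * r^2/2 = f 0 * c0 := by
    have hdiff : Differentiable ℝ (fun t : ℝ =>
        (∫ y : E, f ((0:E) + t • y) * phi y) - c * A * t^2/2) := by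
      intro t
      refine ((keyDeriv hf 0 t).differentiableAt).sub ?_
      simp only [mul_div_assoc]
      exact (differentiable_const _ |>.mul ((differentiable_pow 2).div_const 2)) t
    have hderiv : ∀ t : ℝ, deriv (fun t : ℝ =>
        (∫ y : E, f ((0:E) + t • y) * phi y) - c * A * t^2/2) t = 0 := by
      intro t
      have h1 : (∫ y : E, lap f ((0:E) + t • y) * Phi y) = c * A := by
        have : ∀ y : E, lap f ((0:E) + t • y) * Phi y = c * Phi y := fun y => by rw [hlap]
        simp only [this]
        rw [integral_const_mul]
      have h2 := keyDeriv hf 0 t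
      rw [h1] at h2
      have h3 : HasDerivAt (fun t : ℝ => c * A * t^2/2) (t * (c * A)) t := by
        have h4 := (hasDerivAt_pow 2 t).const_mul (c * A / 2)
        have h5 : (fun t : ℝ => c * A * t^2/2) = fun t : ℝ => c * A / 2 * t^2 := by
          funext t; ring
        rw [h5]
        refine h4.congr_deriv ?_
        push_cast
        ring
      have h6 := h2.sub h3
      rw [sub_self] at h6
      exact h6.deriv
    intro r
    have h := is_const_of_deriv_eq_zero hdiff hderiv r 0
    rw [h]
    rw [F_zero]
    ring
  -- growth bound
  set D1 : ℝ := 2 * |f 0| * c0 + 2 * C * c0 with hD1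
  set D2 : ℝ := 2 * C * c0 with hD2
  have hbound : ∀ r : ℝ, 1 ≤ r → |c| * A * r^2 ≤ D1 + D2 * r := by
    intro r hr
    have hr0 : (0:ℝ) < r := lt_of_lt_of_le one_pos hr
    have hInt : |∫ y : E, f ((0:E) + r • y) * phi y| ≤ (C * (1 + r)) * c0 := by
      have hb : ∀ y : E, |f ((0:E) + r • y) * phi y| ≤ (C * (1 + r)) * phi y := by
        intro y
        by_cases hy : (1:ℝ) ≤ ‖y‖
        · rw [phi_zero hy, mul_zero, abs_zero, mul_zero]
        · push_neg at hy
          rw [abs_mul, abs_of_nonneg (phi_nonneg y)]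
          refine mul_le_mul_of_nonneg_right ?_ (phi_nonneg y)
          refine (hgrow _).trans ?_
          have hnorm : ‖(0:E) + r • y‖ ≤ r := by
            rw [zero_add, norm_smul, Real.norm_eq_abs, abs_of_pos hr0]
            nlinarith [norm_nonneg y]
          have h2 : ‖(0:E) + r • y‖ ^ s ≤ r ^ s :=
            Real.rpow_le_rpow (norm_nonneg _) hnorm hs0
          have h3 : r ^ s ≤ r := by
            calc r ^ s ≤ r ^ (1:ℝ) := Real.rpow_le_rpow_of_exponent_le hr hs1.le
            _ = r := Real.rpow_one r
          nlinarith
      have hbint : Integrable (fun y : E => (C * (1 + r)) * phi y) :=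
        integrable_aux (continuous_const.mul phi_cont)
          (fun y hy => by simp only [phi_zero hy, mul_zero])
      have := norm_integral_le_of_norm_le hbint
        (Filter.Eventually.of_forall (fun y => by rw [Real.norm_eq_abs]; exact hb y))
      rw [Real.norm_eq_abs] at this
      refine this.trans ?_
      rw [integral_const_mul]
    have hGr := hG r
    have heq : c * A * r^2/2 = (∫ y : E, f ((0:E) + r • y) * phi y) - f 0 * c0 := by
      linarith [hGr]
    have h4 : |c * A * r^2/2| ≤ (C * (1 + r)) * c0 + |f 0| * c0 := by
      rw [heq]
      refine (abs_sub _ _).trans ?_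
      gcongr
      rw [abs_mul]
      gcongr
      rw [abs_of_nonneg hc0pos.le]
    have h5 : |c * A * r^2/2| = |c| * A * r^2/2 := by
      rw [abs_div, abs_mul, abs_mul, abs_of_nonneg hApos.le, abs_of_nonneg (sq_nonneg r),
        abs_of_nonneg (by norm_num : (0:ℝ) ≤ 2)]
    rw [h5] at h4
    rw [hD1, hD2]
    nlinarith [hr0, hc0pos]
  -- conclude
  have htend : Filter.Tendsto (fun r : ℝ => D1 * (r^2)⁻¹ + D2 * r⁻¹) Filter.atTop (nhds 0) := by
    have h1 : Filter.Tendsto (fun r : ℝ => (r^2)⁻¹) Filter.atTop (nhds 0) :=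
      (Filter.tendsto_pow_atTop (α := ℝ) (n := 2) (by norm_num)).inv_tendsto_atTop
    have h2 : Filter.Tendsto (fun r : ℝ => r⁻¹) Filter.atTop (nhds 0) :=
      tendsto_inv_atTop_zero
    have := (h1.const_mul D1).add (h2.const_mul D2)
    simpa using this
  have hev : ∀ᶠ r in Filter.atTop, |c| * A ≤ D1 * (r^2)⁻¹ + D2 * r⁻¹ := by
    rw [Filter.eventually_atTop]
    refine ⟨1, fun r hr => ?_⟩
    have hr0 : (0:ℝ) < r := lt_of_lt_of_le one_pos hr
    have hr2 : (0:ℝ) < r^2 := by positivity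
    have h := hbound r hr
    calc |c| * A = (|c| * A * r^2) / r^2 := by field_simp
      _ ≤ (D1 + D2 * r) / r^2 := by gcongr
      _ = D1 * (r^2)⁻¹ + D2 * r⁻¹ := by field_simp
  have hfinal : |c| * A ≤ 0 := ge_of_tendsto htend hev
  by_contra hc
  have hpos : 0 < |c| := abs_pos.mpr hc
  nlinarith

set_option maxHeartbeats 1600000 in
lemma liouville_sublinear (hn : 0 < n) (hf : ContDiff ℝ (⊤:ℕ∞) f)
    (hlap : ∀ x, lap f x = 0) (C s : ℝ) (hC : 0 ≤ C) (hs0 : 0 ≤ s) (hs1 : s < 1)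
    (hgrow : ∀ x : E, |f x| ≤ C * (1 + ‖x‖ ^ s)) (a b : E) : f a = f b := by
  obtain ⟨L, hL⟩ := phi_lip (n := n)
  set c0 := ∫ y : E, phi y with hc0def
  have hc0pos : 0 < c0 := c0_pos hn
  set d := ‖b - a‖ with hddef
  have hd0 : 0 ≤ d := norm_nonneg _
  set V := (volume (closedBall (0:E) 2)).toReal with hVdef
  have hV0 : 0 ≤ V := ENNReal.toReal_nonneg
  set P := (‖a‖ + 2) ^ s with hPdef
  have hP0 : 0 ≤ P := Real.rpow_nonneg (by positivity) s
  -- main estimate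
  have hest : ∀ r : ℝ, max 1 d ≤ r →
      c0 * |f a - f b| ≤ V * C * L * d * r⁻¹ + (V * C * L * d * P) * (r ^ (s - 1)) := by
    intro r hr
    have hr1 : (1:ℝ) ≤ r := le_trans (le_max_left _ _) hr
    have hrd : d ≤ r := le_trans (le_max_right _ _) hr
    have hr0 : (0:ℝ) < r := lt_of_lt_of_le one_pos hr1
    set h : E := r⁻¹ • (b - a) with hhdef
    have hrh : r • h = b - a := by
      rw [hhdef, smul_smul, mul_inv_cancel₀ (ne_of_gt hr0), one_smul]
    have hhn : ‖h‖ = r⁻¹ * d := by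
      rw [hhdef, norm_smul, Real.norm_eq_abs, abs_of_pos (inv_pos.mpr hr0)]
    have hh1 : ‖h‖ ≤ 1 := by
      rw [hhn]
      rw [inv_mul_le_iff₀ hr0]
      linarith
    have hcontf : Continuous f := hf.continuous
    have hca : Continuous (fun y : E => f (a + r • y)) :=
      hcontf.comp (continuous_const.add (continuous_id.const_smul r))
    -- two mean value properties
    have hma := mvp hf hlap a r
    have hmb := mvp hf hlap b r
    -- translation
    have htr : (∫ y : E, f (b + r • y) * phi y) = ∫ y : E, f (a + r • y) * phi (y - h) := by
      have h1 := integral_sub_right_eq_self (μ := volume) (fun y : E => f (b + r • y) * phi y) h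
      rw [← h1]
      refine integral_congr_ae (Filter.Eventually.of_forall (fun y => ?_))
      dsimp only
      rw [smul_sub, hrh]
      congr 2
      abel
    -- difference formula
    have hi1 : Integrable (fun y : E => f (a + r • y) * phi y) :=
      integrable_aux (hca.mul phi_cont) (fun y hy => by simp only [phi_zero hy, mul_zero])
    have hi2 : Integrable (fun y : E => f (a + r • y) * phi (y - h)) := by
      refine integrable_aux2 2 (hca.mul (phi_cont.comp (continuous_id.sub continuous_const)))
        (fun y hy => ?_)
      have : (1:ℝ) ≤ ‖y - h‖ := by
        have h2 := norm_sub_norm_le y (y - h)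
        simp only [sub_sub_cancel] at h2
        linarith
      simp only [phi_zero this, mul_zero]
    have hdiffid : c0 * (f a - f b) = ∫ y : E, f (a + r • y) * (phi y - phi (y - h)) := by
      have : (∫ y : E, f (a + r • y) * (phi y - phi (y - h)))
          = (∫ y : E, f (a + r • y) * phi y) - ∫ y : E, f (a + r • y) * phi (y - h) := by
        rw [← integral_sub hi1 hi2]
        refine integral_congr_ae (Filter.Eventually.of_forall (fun y => by dsimp only; ring))
      rw [this, hma, ← htr, hmb]
      ring
    -- the integrand bound
    set M := (C * (1 + P * r ^ s)) * (L * (r⁻¹ * d)) with hMdef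
    have hM0 : 0 ≤ M := by
      apply mul_nonneg
      · apply mul_nonneg hC
        have : (0:ℝ) ≤ P * r ^ s := mul_nonneg hP0 (Real.rpow_nonneg hr0.le s)
        linarith
      · apply mul_nonneg L.2
        positivity
    have hkey : |∫ y : E, f (a + r • y) * (phi y - phi (y - h))| ≤ V * M := by
      have hbint : Integrable ((closedBall (0:E) 2).indicator (fun _ => M)) :=
        (integrable_indicator_iff measurableSet_closedBall).mpr
          (integrableOn_const measure_closedBall_lt_top.ne)
      have hptwise : ∀ y : E, ‖f (a + r • y) * (phi y - phi (y - h))‖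
          ≤ (closedBall (0:E) 2).indicator (fun _ => M) y := by
        intro y
        by_cases hy : y ∈ closedBall (0:E) 2
        · rw [Set.indicator_of_mem hy]
          rw [mem_closedBall, dist_zero_right] at hy
          rw [Real.norm_eq_abs, abs_mul]
          have hb1 : |f (a + r • y)| ≤ C * (1 + P * r ^ s) := by
            refine (hgrow _).trans ?_
            have hnorm : ‖a + r • y‖ ≤ (‖a‖ + 2) * r := by
              calc ‖a + r • y‖ ≤ ‖a‖ + ‖r • y‖ := norm_add_le _ _
                _ = ‖a‖ + r * ‖y‖ := by rw [norm_smul, Real.norm_eq_abs, abs_of_pos hr0]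
                _ ≤ ‖a‖ + r * 2 := by nlinarith
                _ ≤ (‖a‖ + 2) * r := by nlinarith [norm_nonneg a]
            have h2 : ‖a + r • y‖ ^ s ≤ ((‖a‖ + 2) * r) ^ s :=
              Real.rpow_le_rpow (norm_nonneg _) hnorm hs0
            have h3 : ((‖a‖ + 2) * r) ^ s = P * r ^ s := by
              rw [hPdef, ← Real.mul_rpow (by positivity) hr0.le]
            rw [h3] at h2
            nlinarith [h2]
          have hb2 : |phi y - phi (y - h)| ≤ L * (r⁻¹ * d) := by
            have := hL.dist_le_mul y (y - h)
            rw [Real.dist_eq, dist_eq_norm, sub_sub_cancel] at this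
            rw [← hhn]
            exact this
          calc |f (a + r • y)| * |phi y - phi (y - h)| ≤ (C * (1 + P * r ^ s)) * (L * (r⁻¹ * d)) := by
                apply mul_le_mul hb1 hb2 (abs_nonneg _) ?_
                apply mul_nonneg hC
                have : (0:ℝ) ≤ P * r ^ s := mul_nonneg hP0 (Real.rpow_nonneg hr0.le s)
                linarith
            _ = M := hMdef.symm
        · rw [Set.indicator_of_notMem hy]
          rw [mem_closedBall, dist_zero_right, not_le] at hy
          have hz1 : phi y = 0 := phi_zero (by linarith)
          have hz2 : phi (y - h) = 0 := by
            apply phi_zero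
            have h2 := norm_sub_norm_le y (y - h)
            simp only [sub_sub_cancel] at h2
            linarith
          rw [hz1, hz2, sub_self, mul_zero, norm_zero]
      have := norm_integral_le_of_norm_le hbint (Filter.Eventually.of_forall hptwise)
      rw [Real.norm_eq_abs] at this
      refine this.trans ?_
      rw [integral_indicator_const _ measurableSet_closedBall]
      rw [smul_eq_mul]
      exact le_rfl
    -- combine
    have hcomb : c0 * |f a - f b| ≤ V * M := by
      have h1 : c0 * |f a - f b| = |c0 * (f a - f b)| := by
        rw [abs_mul, abs_of_pos hc0pos]
      rw [h1, hdiffid]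
      exact hkey
    refine hcomb.trans (le_of_eq ?_)
    have hpow : r ^ s * r⁻¹ = r ^ (s - 1) := by
      rw [Real.rpow_sub hr0, Real.rpow_one, div_eq_mul_inv]
    rw [hMdef, ← hpow]
    ring
  -- limit
  have htend : Filter.Tendsto (fun r : ℝ =>
      V * C * L * d * r⁻¹ + (V * C * L * d * P) * (r ^ (s - 1))) Filter.atTop (nhds 0) := by
    have h1 : Filter.Tendsto (fun r : ℝ => r⁻¹) Filter.atTop (nhds (0:ℝ)) :=
      tendsto_inv_atTop_zero
    have h2 : Filter.Tendsto (fun r : ℝ => r ^ (s - 1)) Filter.atTop (nhds (0:ℝ)) := by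
      have := tendsto_rpow_neg_atTop (by linarith : (0:ℝ) < 1 - s)
      convert this using 2 with r
      ring_nf
    have := (h1.const_mul (V * C * L * d)).add (h2.const_mul (V * C * L * d * P))
    simpa using this
  have hev : ∀ᶠ r in Filter.atTop, c0 * |f a - f b| ≤
      V * C * L * d * r⁻¹ + (V * C * L * d * P) * (r ^ (s - 1)) := by
    rw [Filter.eventually_atTop]
    exact ⟨max 1 d, hest⟩
  have hfinal : c0 * |f a - f b| ≤ 0 := ge_of_tendsto htend hev
  have habs : |f a - f b| ≤ 0 := by
    by_contra hcon
    push_neg at hcon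
    nlinarith
  have : f a - f b = 0 := abs_eq_zero.mp (le_antisymm habs (abs_nonneg _))
  linarith


end

/-- If u is biharmonic on ℝⁿ, Δu is bounded and u has sublinear growth, then u is
harmonic and in fact constant. -/
theorem biharmonic_bounded_lap_sublinear {n : ℕ} (u : EuclideanSpace ℝ (Fin n) → ℝ)
    (hu : ContDiff ℝ (⊤ : ℕ∞) u) (hbih : ∀ x, lap (lap u) x = 0)
    (K : ℝ) (hK : ∀ x, |lap u x| ≤ K)
    (B s : ℝ) (hB : 0 < B) (hs0 : 0 ≤ s) (hs1 : s < 1)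
    (hgrow : ∀ x, |u x| ≤ B * (1 + ‖x‖ ^ s)) :
    (∀ x, lap u x = 0) ∧ (∀ x y, u x = u y) := by
  rcases Nat.eq_zero_or_pos n with hn | hn
  · subst hn
    refine ⟨fun x => by simp [lap], fun x y => ?_⟩
    have hxy : x = y := by
      ext i
      exact i.elim0
    rw [hxy]
  · have hu' : ContDiff ℝ (⊤:ℕ∞) u := hu.of_le (by simp)
    have hvsm : ContDiff ℝ (⊤:ℕ∞) (lap u) := lap_contDiff hu'
    have hK0 : 0 ≤ K := le_trans (abs_nonneg _) (hK 0)
    have hvgrow : ∀ x, |lap u x| ≤ K * (1 + ‖x‖ ^ s) := by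
      intro x
      have h1 : (0:ℝ) ≤ ‖x‖ ^ s := Real.rpow_nonneg (norm_nonneg x) s
      nlinarith [hK x]
    have hvconst : ∀ x, lap u x = lap u 0 :=
      fun x => liouville_sublinear hn hvsm hbih K s hK0 hs0 hs1 hvgrow x 0
    have hc0 : lap u 0 = 0 :=
      lap_const_is_zero hn hu' (lap u 0) hvconst B s hB.le hs0 hs1 hgrow
    have hlapzero : ∀ x, lap u x = 0 := fun x => (hvconst x).trans hc0
    exact ⟨hlapzero, fun x y => liouville_sublinear hn hu' hlapzero B s hB.le hs0 hs1 hgrow x y⟩
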